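/- The coefficient-wise congruence ∏_{n≥1} ((1+q^n)/(1-q^n))^n ≡ 1 + 2·∑_{m≥1} d_odd(m) q^m (mod 4) holds in ℤ[[q]], where d_odd(m) is the number of odd divisors of m. -/

import Mathlib

/-!
Since `(1 - q^k)⁻¹ = ∑_{k ∣ j} q^j`, each factor is `(1 + q^k)/(1 - q^k) = 1 + 2 u_k` with
`u_k = ∑_{j > 0, k ∣ j} q^j`. Modulo `4` one has `(1 + 2u)² = 1` and
`(1 + 2u)(1 + 2v) = 1 + 2(u + v)`, so the product collapses to `1 + 2 ∑_{k odd} u_k`, and the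
coefficient of `q^n` in `∑_{k odd} u_k` is the number of odd divisors of `n`.
-/

open PowerSeries

/-- The formal power series `(1+q^k)/(1-q^k)` in `ℤ⟦q⟧`. -/
noncomputable def fps (k : ℕ) : PowerSeries ℤ :=
  (1 + (PowerSeries.X : PowerSeries ℤ) ^ k) *
    PowerSeries.invOfUnit (1 - (PowerSeries.X : PowerSeries ℤ) ^ k) 1

/-- The number of overpartitions of `n`: the coefficient of `q^n` in
`∏_{k≥1} (1+q^k)/(1-q^k)`.  Since each factor with `k > n` contributes only `1`
to coefficients up to degree `n`, the product may be truncated at `k = n`. -/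
noncomputable def pbar (n : ℕ) : ℤ :=
  PowerSeries.coeff n (∏ k ∈ Finset.Icc 1 n, fps k)

/-- The number of plane overpartitions of `n`: the coefficient of `q^n` in
`∏_{k≥1} ((1+q^k)/(1-q^k))^k`, truncated at `k = n` (factors with `k > n` do not
affect coefficients up to degree `n`). -/
noncomputable def plbar (n : ℕ) : ℤ :=
  PowerSeries.coeff n (∏ k ∈ Finset.Icc 1 n, fps k ^ k)

/-- The number of positive odd divisors of `n`. -/
def doddcount (n : ℕ) : ℕ := (n.divisors.filter fun d => Odd d).card

open Finset

section FourEqZero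

variable {R : Type*} [CommRing R]

theorem one_add_two_mul_sq (h4 : (4 : R) = 0) (a : R) : (1 + 2 * a) ^ 2 = 1 := by
  linear_combination (a + a ^ 2) * h4

theorem one_add_two_mul_pow (h4 : (4 : R) = 0) (a : R) (k : ℕ) :
    (1 + 2 * a) ^ k = if Odd k then 1 + 2 * a else 1 := by
  rcases Nat.even_or_odd' k with ⟨j, rfl | rfl⟩
  · simp [pow_mul, one_add_two_mul_sq h4]
  · simp [pow_succ, pow_mul, one_add_two_mul_sq h4]

theorem prod_one_add_two_mul {ι : Type*} (h4 : (4 : R) = 0) (s : Finset ι) (f : ι → R) :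
    ∏ i ∈ s, (1 + 2 * f i) = 1 + 2 * ∑ i ∈ s, f i := by
  classical
  induction s using Finset.induction_on with
  | empty => simp
  | insert a s ha ih =>
    rw [prod_insert ha, sum_insert ha, ih]
    linear_combination f a * (∑ i ∈ s, f i) * h4

end FourEqZero

section OneSubXPow

variable {R : Type*} [CommRing R] {k : ℕ}

theorem expand_mk_one_mul_one_sub_X_pow (hk : k ≠ 0) :
    expand k hk (mk 1 : R⟦X⟧) * (1 - X ^ k) = 1 := by
  rw [← expand_X k hk, ← map_one (expand k hk), ← map_sub, ← map_mul,
    mk_one_mul_one_sub_eq_one, map_one]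

theorem invOfUnit_one_sub_X_pow (hk : k ≠ 0) :
    invOfUnit (1 - X ^ k : R⟦X⟧) 1 = expand k hk (mk 1) :=
  (left_inv_eq_right_inv (expand_mk_one_mul_one_sub_X_pow hk)
    (mul_invOfUnit _ _ (by simp [hk]))).symm

theorem coeff_invOfUnit_one_sub_X_pow (hk : k ≠ 0) (n : ℕ) :
    coeff n (invOfUnit (1 - X ^ k : R⟦X⟧) 1) = if k ∣ n then 1 else 0 := by
  simp [invOfUnit_one_sub_X_pow hk, coeff_expand]

theorem coeff_invOfUnit_one_sub_X_pow_sub_one (hk : k ≠ 0) {n : ℕ} (hn : n ≠ 0) :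
    coeff n (invOfUnit (1 - X ^ k : R⟦X⟧) 1 - 1) = if k ∣ n then 1 else 0 := by
  rw [map_sub, coeff_invOfUnit_one_sub_X_pow hk, coeff_one, if_neg hn, sub_zero]

end OneSubXPow

theorem fps_eq_one_add_two_mul {k : ℕ} (hk : k ≠ 0) :
    fps k = 1 + 2 * (invOfUnit (1 - X ^ k) 1 - 1) := by
  have h := mul_invOfUnit (1 - X ^ k : ℤ⟦X⟧) 1 (by simp [hk])
  rw [fps]
  linear_combination -h

theorem four_eq_zero_powerSeries_zmod_four : (4 : (ZMod 4)⟦X⟧) = 0 := by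
  rw [← map_ofNat (C (R := ZMod 4)), show (4 : ZMod 4) = 0 from rfl, map_zero]

theorem map_fps_pow_zmod_four {k : ℕ} (hk : k ≠ 0) :
    map (Int.castRingHom (ZMod 4)) (fps k ^ k) = if Odd k then
      1 + 2 * map (Int.castRingHom (ZMod 4)) (invOfUnit (1 - X ^ k) 1 - 1) else 1 := by
  rw [map_pow, fps_eq_one_add_two_mul hk, map_add, map_mul, map_one, map_ofNat,
    one_add_two_mul_pow four_eq_zero_powerSeries_zmod_four]

theorem doddcount_eq_card {n : ℕ} (hn : n ≠ 0) :
    doddcount n = #{k ∈ Icc 1 n | Odd k ∧ k ∣ n} := by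
  rw [doddcount]
  congr 1
  ext d
  simp only [mem_filter, mem_Icc, Nat.mem_divisors]
  constructor
  · rintro ⟨⟨hd, -⟩, hodd⟩
    exact ⟨⟨hodd.pos, Nat.le_of_dvd (Nat.pos_of_ne_zero hn) hd⟩, hodd, hd⟩
  · rintro ⟨-, hodd, hd⟩
    exact ⟨⟨hd, hn⟩, hodd⟩

/-- `∏_{n≥1} ((1+q^n)/(1-q^n))^n ≡ 1 + 2·∑_{m≥1} d_odd(m)·q^m (mod 4)`
coefficient-wise, where `d_odd(m)` is the number of odd divisors of `m`. -/
theorem plbar_congr_two_doddcount (n : ℕ) :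
    plbar n ≡ (if n = 0 then 1 else 2 * (doddcount n : ℤ)) [ZMOD 4] := by
  rcases eq_or_ne n 0 with rfl | hn
  · simp [plbar]
  rw [if_neg hn]
  apply (ZMod.intCast_eq_intCast_iff _ _ 4).mp
  set φ := PowerSeries.map (Int.castRingHom (ZMod 4))
  set u : ℕ → ℤ⟦X⟧ := fun k ↦ invOfUnit (1 - X ^ k) 1 - 1
  have hfactor : ∀ k ∈ Icc 1 n, φ (fps k ^ k) = if Odd k then 1 + 2 * φ (u k) else 1 :=
    fun k hk ↦ map_fps_pow_zmod_four (by simp at hk; omega)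
  calc ((plbar n : ℤ) : ZMod 4)
      = coeff n (φ (∏ k ∈ Icc 1 n, fps k ^ k)) := by
        rw [coeff_map]; rfl
    _ = coeff n (1 + 2 * ∑ k ∈ Icc 1 n with Odd k, φ (u k)) := by
      rw [map_prod, prod_congr rfl hfactor, ← prod_filter,
        prod_one_add_two_mul four_eq_zero_powerSeries_zmod_four]
    _ = 2 * ∑ k ∈ Icc 1 n with Odd k, if k ∣ n then 1 else 0 := by
      rw [map_add, coeff_one, if_neg hn, zero_add, ← map_ofNat (C (R := ZMod 4)), coeff_C_mul,
        map_sum]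
      refine congrArg _ (sum_congr rfl fun k hk ↦ ?_)
      have hk0 : k ≠ 0 := (mem_filter.mp hk).2.pos.ne'
      simp only [φ, u, coeff_map, coeff_invOfUnit_one_sub_X_pow_sub_one hk0 hn]
      split_ifs <;> simp
    _ = ((2 * doddcount n : ℤ) : ZMod 4) := by
      simp [sum_boole, filter_filter, doddcount_eq_card hn]
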